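/- Uniform bound on nearest-neighbor Green's functions: for every β > 0, ε > 0, L ≥ 2, every t : Λ → ℝ, and every collection of n pairwise distinct nearest-neighbor pairs (x₁,y₁), …, (xₙ,yₙ), the n×n matrix K with entries K_{ij} = β [F_{x_i y_i}; D_{β,ε}(t)^{-1} F_{x_j y_j}], where F_{xy} = e^{(t_x+t_y)/2}(δ_x − δ_y), satisfies 0 ≤ K ≤ Id in the Loewner order. In particular, for a single nearest-neighbor pair (x,y), 0 ≤ β e^{t_x+t_y} [(δ_x − δ_y); D_{β,ε}(t)^{-1} (δ_x − δ_y)] ≤ 1. -/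

import Mathlib

open scoped BigOperators Classical
open MeasureTheory

noncomputable section

/-- The 3-dimensional discrete torus of side `L`. -/
abbrev Torus (L : ℕ) := Fin 3 → ZMod L

/-- The unit vector in direction `i`. -/
def unitVec (L : ℕ) (i : Fin 3) : Torus L := fun j => if j = i then 1 else 0

/-- Nearest-neighbor relation on the torus. -/
def NN {L : ℕ} (x y : Torus L) : Prop :=
  x ≠ y ∧ ∃ i : Fin 3, y = x + unitVec L i ∨ y = x - unitVec L i

/-- Periodic (Euclidean) distance on the torus. -/
def torusDist {L : ℕ} (x y : Torus L) : ℝ :=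
  Real.sqrt (∑ i : Fin 3, (min ((x i - y i).val) (L - (x i - y i).val) : ℝ) ^ 2)

variable {L : ℕ}

/-- Sum of a (symmetric) function over unordered nearest-neighbor pairs. -/
def nnSum [NeZero L] (f : Torus L → Torus L → ℝ) : ℝ :=
  (1 / 2) * ∑ x : Torus L, ∑ y : Torus L, if NN x y then f x y else 0

/-- The matrix of the operator `D_{β,ε}(t)`, the symmetric operator on `ℝ^Λ` with
quadratic form `β ∑_{NN (ij)} e^{t_i+t_j}(v_i-v_j)² + ε ∑_k e^{t_k} v_k²`. -/
def Dmat [NeZero L] (β ε : ℝ) (t : Torus L → ℝ) : Matrix (Torus L) (Torus L) ℝ :=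
  Matrix.of fun j k =>
    if j = k then
      β * (∑ i : Torus L, if NN i j then Real.exp (t i + t j) else 0) + ε * Real.exp (t j)
    else if NN j k then -(β * Real.exp (t j + t k)) else 0

/-- The free energy (effective action) `F_{β,ε}(t)`. -/
def freeEnergy [NeZero L] (β ε : ℝ) (t : Torus L → ℝ) : ℝ :=
  β * nnSum (fun i j => Real.cosh (t i - t j) - 1)
    - (1 / 2) * Real.log (Dmat β ε t).det
    + ∑ k : Torus L, (t k - ε + ε * Real.cosh (t k))

/-- The expectation `⟨f⟩ = ∫ f(t) e^{-F_{β,ε}(t)} ∏ dt_k/√(2π)`. -/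
def expect [NeZero L] (β ε : ℝ) (f : (Torus L → ℝ) → ℝ) : ℝ :=
  ∫ t : Torus L → ℝ,
    f t * Real.exp (-(freeEnergy β ε t)) *
      ((Real.sqrt (2 * Real.pi))⁻¹) ^ (Fintype.card (Torus L))

/-- The coordinate unit vector `δ_x`. -/
def delta {L : ℕ} (x : Torus L) : Torus L → ℝ := fun j => if j = x then 1 else 0

/-- `[u ; G v] = ∑_{a,b} u_a G_{ab} v_b`. -/
def qform [NeZero L] (G : Matrix (Torus L) (Torus L) ℝ) (u v : Torus L → ℝ) : ℝ :=
  ∑ a : Torus L, ∑ b : Torus L, u a * G a b * v b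

/-- `F_{xy} = e^{(t_x+t_y)/2}(δ_x - δ_y)`. -/
def Fvec {L : ℕ} (t : Torus L → ℝ) (x y : Torus L) : Torus L → ℝ :=
  fun j => Real.exp ((t x + t y) / 2) * (delta x j - delta y j)

/-!
Each ordered nearest-neighbor pair `(x, y)` contributes the rank-one matrix `F_{xy} F_{xy}ᵀ`,
and `D_{β,ε}(t) = (β/2) ∑_{NN (x, y)} F_{xy} F_{xy}ᵀ + ε diag(e^t)`. Since every unordered bond
occurs twice among the ordered pairs, distinct bonds `(x_i, y_i)` give
`β ∑_i F_{x_i y_i} F_{x_i y_i}ᵀ ≤ D_{β,ε}(t)`. With `B` the matrix whose rows are `√β F_{x_i y_i}`,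
`K = B D⁻¹ Bᵀ`, so `0 ≤ K`; and `BᵀB ≤ D` is equivalent to `K ≤ 1`, because both say that the
block matrix `[[D, Bᵀ], [B, 1]]` is positive semidefinite (two Schur complements).
The single-pair bound is the diagonal entry of the case `n = 1`.
-/

open Matrix

namespace Matrix

variable {m n K : Type*} [Fintype m] [Fintype n] [DecidableEq m] [DecidableEq n]
  [Field K] [PartialOrder K] [StarRing K] [StarOrderedRing K]

theorem PosDef.posSemidef_one_sub_mul_inv_mul_conjTranspose {A : Matrix m m K} (hA : A.PosDef)
    {B : Matrix n m K} (h : (A - Bᴴ * B).PosSemidef) : (1 - B * A⁻¹ * Bᴴ).PosSemidef := by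
  have := hA.isUnit.invertible
  have := invertibleOne (α := Matrix n n K)
  have hone : (1 : Matrix n n K).PosDef := .one
  have hblock := (hone.fromBlocks₂₂ A Bᴴ).mpr (by simpa using h)
  simpa using (hA.fromBlocks₁₁ Bᴴ 1).mp hblock

omit [Fintype m] [DecidableEq m] [DecidableEq n] in
theorem transpose_mul_self_eq_sum_vecMulVec {R : Type*} [CommSemiring R] (M : Matrix n m R) :
    Mᵀ * M = ∑ i, vecMulVec (M i) (M i) := by
  ext a b
  simp [mul_apply, Matrix.sum_apply, vecMulVec_apply]

omit [Fintype n] [DecidableEq n] in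
theorem sum_smul_vecMulVec_single_sub_single {R : Type*} [CommRing R] (w : m → m → R) :
    ∑ j, ∑ k, w j k • vecMulVec (Pi.single j 1 - Pi.single k 1 : m → R)
        (Pi.single j 1 - Pi.single k 1) =
      diagonal (fun a => ∑ k, (w a k + w k a)) - (of w + (of w)ᵀ) := by
  ext a b
  simp only [Matrix.sum_apply, Matrix.smul_apply, vecMulVec_apply, Pi.sub_apply, Pi.single_apply,
    smul_eq_mul, mul_sub, mul_ite, mul_one, mul_zero, Finset.sum_sub_distrib, Matrix.sub_apply,
    diagonal_apply, Matrix.add_apply, of_apply, transpose_apply]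
  by_cases hab : a = b
  · subst hab
    simp only [Finset.sum_ite_irrel, Finset.sum_sub_distrib, Finset.sum_const_zero,
      Finset.sum_ite_eq, Finset.mem_univ, if_true, Finset.sum_add_distrib]
    ring
  · simp only [Finset.sum_ite_irrel, Finset.sum_sub_distrib, Finset.sum_const_zero,
      Finset.sum_ite_eq, Finset.mem_univ, if_true, hab, if_false]
    ring

end Matrix

theorem Sym2.injective_sumElim_of_injective_mk {ι α : Type*} {x y : ι → α}
    (hmk : Function.Injective fun i => s(x i, y i)) (hne : ∀ i, x i ≠ y i) :
    Function.Injective (Sum.elim (fun i => (x i, y i)) fun i => (y i, x i)) := by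
  refine Function.Injective.sumElim (fun a b h => hmk (by simp_all))
    (fun a b h => hmk (by simp_all)) fun a b hab => ?_
  obtain ⟨hxy, hyx⟩ := Prod.mk.inj hab
  have hba : b = a := hmk (show s(x b, y b) = s(x a, y a) by rw [← hxy, ← hyx, Sym2.eq_swap])
  exact hne a (hba ▸ hxy)

theorem NN.symm {x y : Torus L} (h : NN x y) : NN y x := by
  obtain ⟨hne, i, h1 | h1⟩ := h
  · exact ⟨hne.symm, i, Or.inr (by rw [h1, add_sub_cancel_right])⟩
  · exact ⟨hne.symm, i, Or.inl (by rw [h1, sub_add_cancel])⟩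

theorem NN.irrefl (x : Torus L) : ¬NN x x := fun h => h.1 rfl

theorem delta_eq_single (x : Torus L) : delta x = Pi.single x 1 := by
  ext j
  simp [delta, Pi.single_apply]

def nnWeight (t : Torus L → ℝ) (j k : Torus L) : ℝ :=
  if NN j k then Real.exp (t j + t k) else 0

theorem nnWeight_comm (t : Torus L → ℝ) (j k : Torus L) : nnWeight t j k = nnWeight t k j := by
  simp only [nnWeight, add_comm (t j)]
  exact if_congr ⟨NN.symm, NN.symm⟩ rfl rfl

def bondMatrix (t : Torus L → ℝ) (x y : Torus L) : Matrix (Torus L) (Torus L) ℝ :=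
  vecMulVec (Fvec t x y) (Fvec t x y)

theorem bondMatrix_comm (t : Torus L → ℝ) (x y : Torus L) :
    bondMatrix t y x = bondMatrix t x y := by
  ext a b
  simp only [bondMatrix, vecMulVec_apply, Fvec, add_comm (t y)]
  ring

theorem bondMatrix_eq_smul (t : Torus L → ℝ) (x y : Torus L) :
    bondMatrix t x y = Real.exp (t x + t y) •
      vecMulVec (Pi.single x 1 - Pi.single y 1) (Pi.single x 1 - Pi.single y 1) := by
  ext a b
  simp only [bondMatrix, vecMulVec_apply, Fvec, Matrix.smul_apply, smul_eq_mul, Pi.sub_apply,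
    delta_eq_single]
  rw [← add_halves (t x + t y), Real.exp_add, add_halves]
  ring

section

variable [NeZero L]

def nnPairs : Finset (Torus L × Torus L) := {p | NN p.1 p.2}

theorem bondMatrix_posSemidef (t : Torus L → ℝ) (x y : Torus L) :
    (bondMatrix t x y).PosSemidef := by
  simpa [bondMatrix] using posSemidef_vecMulVec_self_star (Fvec t x y)

theorem dmat_eq_sum_bondMatrix_add_diagonal (β ε : ℝ) (t : Torus L → ℝ) :
    Dmat β ε t = (β / 2) • ∑ p ∈ nnPairs, bondMatrix t p.1 p.2 +
      diagonal fun k => ε * Real.exp (t k) := by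
  have hbonds : ∑ p ∈ nnPairs, bondMatrix t p.1 p.2 =
      ∑ j, ∑ k, nnWeight t j k • vecMulVec (Pi.single j 1 - Pi.single k 1 : Torus L → ℝ)
        (Pi.single j 1 - Pi.single k 1) := by
    simp only [nnPairs, Finset.sum_filter, ← Finset.univ_product_univ, Finset.sum_product,
      bondMatrix_eq_smul, nnWeight, ite_smul, zero_smul]
  rw [hbonds, sum_smul_vecMulVec_single_sub_single]
  ext a b
  by_cases hab : a = b
  · subst hab
    simp only [Matrix.add_apply, Matrix.smul_apply, Matrix.sub_apply, diagonal_apply_eq,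
      smul_eq_mul, of_apply, transpose_apply, nnWeight_comm t a, ← two_mul, Finset.sum_add_distrib]
    simp only [Dmat, nnWeight, of_apply, if_true, NN.irrefl, if_false]
    ring
  · simp only [Matrix.add_apply, Matrix.smul_apply, Matrix.sub_apply, diagonal_apply_ne _ hab,
      smul_eq_mul, of_apply, transpose_apply, nnWeight_comm t b a]
    simp only [Dmat, nnWeight, of_apply, hab, if_false]
    split_ifs <;> ring

theorem dmat_posDef {β ε : ℝ} (hβ : 0 ≤ β) (hε : 0 < ε) (t : Torus L → ℝ) :
    (Dmat β ε t).PosDef := by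
  rw [dmat_eq_sum_bondMatrix_add_diagonal]
  refine PosDef.posSemidef_add ?_ (PosDef.diagonal fun k => by positivity)
  exact (posSemidef_sum _ fun p _ => bondMatrix_posSemidef t p.1 p.2).smul (by positivity)

theorem posSemidef_sum_nnPairs_sub_two_smul (t : Torus L → ℝ) {n : ℕ} (x y : Fin n → Torus L)
    (hNN : ∀ i, NN (x i) (y i)) (hdistinct : Function.Injective fun i => s(x i, y i)) :
    (∑ p ∈ nnPairs, bondMatrix t p.1 p.2 - 2 • ∑ i, bondMatrix t (x i) (y i)).PosSemidef := by
  let e : Fin n ⊕ Fin n ↪ Torus L × Torus L :=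
    ⟨_, Sym2.injective_sumElim_of_injective_mk hdistinct fun i => (hNN i).1⟩
  have hsub : Finset.univ.map e ⊆ nnPairs := by
    intro p hp
    obtain ⟨i | i, -, rfl⟩ := Finset.mem_map.mp hp
    · simpa [nnPairs, e] using hNN i
    · simpa [nnPairs, e] using (hNN i).symm
  have hsum : ∑ p ∈ Finset.univ.map e, bondMatrix t p.1 p.2 =
      2 • ∑ i, bondMatrix t (x i) (y i) := by
    simp [e, Finset.sum_map, Fintype.sum_sum_type, bondMatrix_comm, two_smul]
  rw [← Finset.sum_sdiff hsub, hsum, add_sub_cancel_right]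
  exact posSemidef_sum _ fun p _ => bondMatrix_posSemidef t p.1 p.2

theorem dmat_sub_sum_bondMatrix_posSemidef {β ε : ℝ} (hβ : 0 ≤ β) (hε : 0 ≤ ε)
    (t : Torus L → ℝ) {n : ℕ} (x y : Fin n → Torus L)
    (hNN : ∀ i, NN (x i) (y i)) (hdistinct : Function.Injective fun i => s(x i, y i)) :
    (Dmat β ε t - β • ∑ i, bondMatrix t (x i) (y i)).PosSemidef := by
  have hsplit : Dmat β ε t - β • ∑ i, bondMatrix t (x i) (y i) =
      (β / 2) • (∑ p ∈ nnPairs, bondMatrix t p.1 p.2 - 2 • ∑ i, bondMatrix t (x i) (y i)) +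
        diagonal fun k => ε * Real.exp (t k) := by
    rw [dmat_eq_sum_bondMatrix_add_diagonal]
    module
  rw [hsplit]
  exact ((posSemidef_sum_nnPairs_sub_two_smul t x y hNN hdistinct).smul (by positivity)).add
    (PosSemidef.diagonal fun k => by positivity)

theorem of_qform_eq_mul_mul_transpose {ι : Type*} (G : Matrix (Torus L) (Torus L) ℝ)
    (u : ι → Torus L → ℝ) :
    of (fun i j => qform G (u i) (u j)) = of u * G * (of u)ᵀ := by
  ext i j
  simp only [qform, of_apply, mul_apply, transpose_apply, Finset.sum_mul]
  exact Finset.sum_comm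

theorem qform_Fvec_self (G : Matrix (Torus L) (Torus L) ℝ) (t : Torus L → ℝ) (x y : Torus L) :
    qform G (Fvec t x y) (Fvec t x y) =
      Real.exp (t x + t y) * qform G (delta x - delta y) (delta x - delta y) := by
  simp only [qform, Fvec, Finset.mul_sum, Pi.sub_apply]
  rw [← add_halves (t x + t y), Real.exp_add, add_halves]
  refine Finset.sum_congr rfl fun a _ => Finset.sum_congr rfl fun b _ => ?_
  ring

def nnGreenMatrix (β ε : ℝ) (t : Torus L → ℝ) {n : ℕ} (x y : Fin n → Torus L) :
    Matrix (Fin n) (Fin n) ℝ :=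
  of fun i j => β * qform (Dmat β ε t)⁻¹ (Fvec t (x i) (y i)) (Fvec t (x j) (y j))

theorem nnGreenMatrix_eq {β : ℝ} (hβ : 0 ≤ β) (ε : ℝ) (t : Torus L → ℝ) {n : ℕ}
    (x y : Fin n → Torus L) :
    nnGreenMatrix β ε t x y = (√β • of fun i => Fvec t (x i) (y i)) * (Dmat β ε t)⁻¹ *
      (√β • of fun i => Fvec t (x i) (y i))ᴴ := by
  simp only [conjTranspose_eq_transpose_of_trivial, transpose_smul, Matrix.smul_mul,
    Matrix.mul_smul, smul_smul, Real.mul_self_sqrt hβ, ← of_qform_eq_mul_mul_transpose]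
  rfl

theorem nnGreenMatrix_posSemidef {β ε : ℝ} (hβ : 0 ≤ β) (hε : 0 < ε)
    (t : Torus L → ℝ) {n : ℕ} (x y : Fin n → Torus L) :
    (nnGreenMatrix β ε t x y).PosSemidef := by
  rw [nnGreenMatrix_eq hβ]
  exact (dmat_posDef hβ hε t).inv.posSemidef.mul_mul_conjTranspose_same _

theorem one_sub_nnGreenMatrix_posSemidef {β ε : ℝ} (hβ : 0 ≤ β) (hε : 0 < ε)
    (t : Torus L → ℝ) {n : ℕ} (x y : Fin n → Torus L)
    (hNN : ∀ i, NN (x i) (y i)) (hdistinct : Function.Injective fun i => s(x i, y i)) :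
    (1 - nnGreenMatrix β ε t x y).PosSemidef := by
  rw [nnGreenMatrix_eq hβ]
  refine (dmat_posDef hβ hε t).posSemidef_one_sub_mul_inv_mul_conjTranspose ?_
  simp only [conjTranspose_eq_transpose_of_trivial, transpose_smul, Matrix.smul_mul,
    Matrix.mul_smul, smul_smul, Real.mul_self_sqrt hβ, transpose_mul_self_eq_sum_vecMulVec]
  exact dmat_sub_sum_bondMatrix_posSemidef hβ hε.le t x y hNN hdistinct

end

/-- **Uniform bound on nearest-neighbor Green's functions.** For any collection of `n`
pairwise distinct nearest-neighbor pairs, the matrix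
`K_{ij} = β [F_{x_i y_i}; D_{β,ε}(t)⁻¹ F_{x_j y_j}]` satisfies `0 ≤ K ≤ Id` in the
Loewner order; in particular, for a single nearest-neighbor pair `(x', y')`,
`0 ≤ β e^{t_{x'}+t_{y'}} [(δ_{x'} - δ_{y'}); D_{β,ε}(t)⁻¹ (δ_{x'} - δ_{y'})] ≤ 1`. -/
theorem nn_green_bound (β ε : ℝ) (hβ : 0 < β) (hε : 0 < ε) (L : ℕ)
    (t : Torus (L + 2) → ℝ) (n : ℕ) (x y : Fin n → Torus (L + 2))
    (hNN : ∀ i, NN (x i) (y i))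
    (hdistinct : Function.Injective fun i => s(x i, y i)) :
    ((Matrix.of fun i j : Fin n =>
          β * qform (Dmat β ε t)⁻¹ (Fvec t (x i) (y i)) (Fvec t (x j) (y j))).PosSemidef ∧
        ((1 : Matrix (Fin n) (Fin n) ℝ) - Matrix.of fun i j : Fin n =>
          β * qform (Dmat β ε t)⁻¹ (Fvec t (x i) (y i)) (Fvec t (x j) (y j))).PosSemidef) ∧
      ∀ x' y' : Torus (L + 2), NN x' y' →
        0 ≤ β * Real.exp (t x' + t y') *
            qform (Dmat β ε t)⁻¹ (delta x' - delta y') (delta x' - delta y') ∧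
          β * Real.exp (t x' + t y') *
            qform (Dmat β ε t)⁻¹ (delta x' - delta y') (delta x' - delta y') ≤ 1 := by
  refine ⟨⟨nnGreenMatrix_posSemidef hβ.le hε t x y,
    one_sub_nnGreenMatrix_posSemidef hβ.le hε t x y hNN hdistinct⟩, fun x' y' hxy => ?_⟩
  let x₁ : Fin 1 → Torus (L + 2) := fun _ => x'
  let y₁ : Fin 1 → Torus (L + 2) := fun _ => y'
  have hsingle : β * Real.exp (t x' + t y') *
      qform (Dmat β ε t)⁻¹ (delta x' - delta y') (delta x' - delta y') =
        nnGreenMatrix β ε t x₁ y₁ 0 0 := by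
    rw [nnGreenMatrix, of_apply, qform_Fvec_self, mul_assoc]
  have hlower := (nnGreenMatrix_posSemidef hβ.le hε t x₁ y₁).diag_nonneg (i := 0)
  have hupper := (one_sub_nnGreenMatrix_posSemidef hβ.le hε t x₁ y₁ (fun _ => hxy)
    (Function.injective_of_subsingleton _)).diag_nonneg (i := 0)
  rw [Matrix.sub_apply, one_apply_eq, sub_nonneg] at hupper
  rw [hsingle]
  exact ⟨hlower, hupper⟩

end
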